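/- Let p₁ = p_{1R} + i p_{1I} ∈ ℂ with p_{1R} > 0, α₁ ∈ ℂ, α₁ ≠ 0, and set η_{1R}(y,s) = p_{1R}(y + s/|p₁|²), η_{10} = log(|α₁| |p₁|² / (4 p_{1R})), and x(y,s) = y − (2 p_{1R}/|p₁|²)(tanh(η_{1R}(y,s) + η_{10}) + 1). Then: (i) ∂x/∂y (y,s) = 1 − (2 p_{1R}²/|p₁|²) sech²(η_{1R}(y,s) + η_{10}) for all (y,s); (ii) for each fixed s, the infimum over y ∈ ℝ of ∂x/∂y (y,s) equals (p_{1I}² − p_{1R}²)/(p_{1R}² + p_{1I}²), and it is attained exactly where η_{1R} + η_{10} = 0; (iii) ∂x/∂y (y,s) > 0 for all (y,s) if and only if p_{1R} < |p_{1I}|. -/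

import Mathlib

open Complex

/-- `sech u = 2/(e^u + e^{−u})`. -/
noncomputable def sech (u : ℝ) : ℝ := 2 / (Real.exp u + Real.exp (-u))

/-- Partial derivative in the first variable (`y`) of a real-valued function. -/
noncomputable def pdyR (F : ℝ → ℝ → ℝ) (y s : ℝ) : ℝ := deriv (fun y' => F y' s) y

/-!
Along a line `s = const` the coordinate `x` is `y ↦ y - c (tanh (p_{1R} y + b) + 1)`, so
`∂x/∂y = g (η_{1R} + η_{10})` with `g u = 1 - K sech² u` and `K = 2 p_{1R}² / |p₁|² > 0`.
Since `sech² u ≤ 1` with equality exactly at `u = 0`, the function `g` attains its minimum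
`1 - K = (p_{1I}² - p_{1R}²)/|p₁|²` exactly at `u = 0`, and `g > 0` everywhere iff `K < 1`,
i.e. iff `p_{1R}² < p_{1I}²`. As `y ↦ η_{1R}(y, s) + η_{10}` is an affine bijection of `ℝ`,
these statements about `g` transfer to `∂x/∂y`.
-/

lemma sech_eq_inv_cosh (u : ℝ) : sech u = (Real.cosh u)⁻¹ := by
  rw [sech, Real.cosh_eq, ← inv_div]

lemma sech_zero : sech 0 = 1 := by
  norm_num [sech]

lemma sech_sq_le_one (u : ℝ) : sech u ^ 2 ≤ 1 := by
  rw [sech_eq_inv_cosh, inv_pow]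
  exact inv_le_one_of_one_le₀ (one_le_pow₀ (Real.one_le_cosh u))

lemma sech_sq_eq_one_iff {u : ℝ} : sech u ^ 2 = 1 ↔ u = 0 := by
  rw [sech_eq_inv_cosh, inv_pow, inv_eq_one,
    pow_eq_one_iff_of_nonneg (Real.cosh_pos u).le two_ne_zero]
  exact ⟨fun h => by_contra fun hu => (Real.one_lt_cosh.2 hu).ne' h, fun h => h ▸ Real.cosh_zero⟩

lemma hasDerivAt_tanh (u : ℝ) : HasDerivAt Real.tanh (sech u ^ 2) u := by
  have hquot := (Real.hasDerivAt_sinh u).div (Real.hasDerivAt_cosh u) (Real.cosh_pos u).ne'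
  have htanh : Real.sinh / Real.cosh = Real.tanh := funext fun v => (Real.tanh_eq_sinh_div_cosh v).symm
  rw [htanh] at hquot
  refine hquot.congr_deriv ?_
  rw [← sq, ← sq, Real.cosh_sq_sub_sinh_sq, sech_eq_inv_cosh, inv_pow, one_div]

lemma deriv_sub_mul_tanh_affine (a b c y : ℝ) :
    deriv (fun y => y - c * (Real.tanh (a * y + b) + 1)) y = 1 - c * a * sech (a * y + b) ^ 2 := by
  have haff : HasDerivAt (fun y => a * y + b) a y := by
    simpa using ((hasDerivAt_id y).const_mul a).add_const b
  have htanh : HasDerivAt (Real.tanh ∘ fun y => a * y + b) (sech (a * y + b) ^ 2 * a) y :=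
    (hasDerivAt_tanh (a * y + b)).comp y haff
  have h : HasDerivAt (fun y => y - c * (Real.tanh (a * y + b) + 1))
      (1 - c * (sech (a * y + b) ^ 2 * a)) y :=
    (hasDerivAt_id y).sub ((htanh.add_const 1).const_mul c)
  rw [h.deriv]
  ring

lemma isLeast_range_one_sub_mul_sech_sq {K : ℝ} (hK : 0 ≤ K) :
    IsLeast (Set.range fun u => 1 - K * sech u ^ 2) (1 - K) := by
  refine ⟨⟨0, by simp [sech_zero]⟩, ?_⟩
  rintro _ ⟨u, rfl⟩
  nlinarith [sech_sq_le_one u]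

lemma one_sub_mul_sech_sq_eq_iff {K u : ℝ} (hK : K ≠ 0) : 1 - K * sech u ^ 2 = 1 - K ↔ u = 0 := by
  rw [sub_right_inj, mul_eq_left₀ hK, sech_sq_eq_one_iff]

lemma forall_one_sub_mul_sech_sq_pos_iff {K : ℝ} (hK : 0 ≤ K) :
    (∀ u, 0 < 1 - K * sech u ^ 2) ↔ K < 1 := by
  refine ⟨fun h => by simpa [sech_zero] using h 0, fun hK1 u => ?_⟩
  nlinarith [sech_sq_le_one u]

lemma surjective_mul_add {a : ℝ} (ha : a ≠ 0) (b : ℝ) : Function.Surjective fun y => a * y + b :=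
  fun u => ⟨(u - b) / a, by field_simp; ring⟩

lemma two_mul_sq_div_lt_one_iff {a : ℝ} (ha : 0 < a) (b : ℝ) :
    2 * a ^ 2 / (a ^ 2 + b ^ 2) < 1 ↔ a < |b| := by
  rw [div_lt_one (by positivity), ← abs_of_pos ha, ← sq_lt_sq, sq_abs]
  constructor <;> intro h <;> linarith

theorem csp_one_soliton_xy_derivative_general
    (p1R p1I : ℝ) (hp : 0 < p1R)
    (η1R : ℝ → ℝ → ℝ)
    (hη1R : ∀ y s, η1R y s = p1R * (y + s / (p1R^2 + p1I^2)))
    (η10 : ℝ)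
    (x : ℝ → ℝ → ℝ)
    (hx : ∀ y s, x y s = y - (2 * p1R / (p1R^2 + p1I^2)) * (Real.tanh (η1R y s + η10) + 1)) :
    (∀ y s, pdyR x y s
        = 1 - (2 * p1R^2 / (p1R^2 + p1I^2)) * (sech (η1R y s + η10))^2)
    ∧ (∀ s,
        IsGLB (Set.range fun y => pdyR x y s) ((p1I^2 - p1R^2) / (p1R^2 + p1I^2))
        ∧ ∀ y, (pdyR x y s = (p1I^2 - p1R^2) / (p1R^2 + p1I^2) ↔ η1R y s + η10 = 0))
    ∧ ((∀ y s, 0 < pdyR x y s) ↔ p1R < |p1I|) := by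
  set D := p1R ^ 2 + p1I ^ 2 with hD_def
  have hD : 0 < D := by positivity
  set K := 2 * p1R ^ 2 / D with hK_def
  have hK : 0 < K := by positivity
  have hmin : (p1I ^ 2 - p1R ^ 2) / D = 1 - K := by
    rw [hK_def, eq_sub_iff_add_eq, ← add_div, div_eq_one_iff_eq hD.ne', hD_def]
    ring
  have hη : ∀ y s, η1R y s + η10 = p1R * y + (p1R * (s / D) + η10) := fun y s => by
    rw [hη1R]
    ring
  have hsurj : ∀ s, Function.Surjective fun y => η1R y s + η10 := fun s => by
    simpa only [hη] using surjective_mul_add hp.ne' _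
  have hdiff : ∀ y s, pdyR x y s = 1 - K * sech (η1R y s + η10) ^ 2 := fun y s => by
    have hline : (fun y' => x y' s) =
        fun y' => y' - 2 * p1R / D * (Real.tanh (p1R * y' + (p1R * (s / D) + η10)) + 1) :=
      funext fun y' => by rw [hx, hη]
    rw [pdyR, hline, deriv_sub_mul_tanh_affine, hη]
    ring
  refine ⟨hdiff, fun s => ⟨?_, fun y => ?_⟩, ?_⟩
  · have hrange : (Set.range fun y => pdyR x y s) = Set.range fun u => 1 - K * sech u ^ 2 := by
      simp only [hdiff]
      exact (hsurj s).range_comp fun u => 1 - K * sech u ^ 2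
    rw [hrange, hmin]
    exact (isLeast_range_one_sub_mul_sech_sq hK.le).isGLB
  · rw [hdiff, hmin, one_sub_mul_sech_sq_eq_iff hK.ne']
  · calc (∀ y s, 0 < pdyR x y s) ↔ ∀ u, 0 < 1 - K * sech u ^ 2 := by
          simp only [hdiff]
          refine ⟨fun h u => ?_, fun h y s => h _⟩
          obtain ⟨y, rfl⟩ := hsurj 0 u
          exact h y 0
      _ ↔ K < 1 := forall_one_sub_mul_sech_sq_pos_iff hK.le
      _ ↔ p1R < |p1I| := two_mul_sq_div_lt_one_iff hp p1I

/-- Properties of `∂x/∂y` for the hodograph coordinate of the CSP one-soliton: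
(i) the explicit sech² formula; (ii) for each `s`, its infimum over `y` is
`(p_{1I}² − p_{1R}²)/(p_{1R}² + p_{1I}²)`, attained exactly where `η_{1R} + η_{10} = 0`;
(iii) it is everywhere positive iff `p_{1R} < |p_{1I}|`. -/
theorem csp_one_soliton_xy_derivative
    (p1R p1I : ℝ) (hp : 0 < p1R) (α₁ : ℂ) (hα : α₁ ≠ 0)
    (η1R : ℝ → ℝ → ℝ)
    (hη1R : ∀ y s, η1R y s = p1R * (y + s / (p1R^2 + p1I^2)))
    (η10 : ℝ)
    (hη10 : η10 = Real.log (‖α₁‖ * (p1R^2 + p1I^2) / (4 * p1R)))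
    (x : ℝ → ℝ → ℝ)
    (hx : ∀ y s, x y s = y - (2 * p1R / (p1R^2 + p1I^2)) * (Real.tanh (η1R y s + η10) + 1)) :
    (∀ y s, pdyR x y s
        = 1 - (2 * p1R^2 / (p1R^2 + p1I^2)) * (sech (η1R y s + η10))^2)
    ∧ (∀ s,
        IsGLB (Set.range fun y => pdyR x y s) ((p1I^2 - p1R^2) / (p1R^2 + p1I^2))
        ∧ ∀ y, (pdyR x y s = (p1I^2 - p1R^2) / (p1R^2 + p1I^2) ↔ η1R y s + η10 = 0))
    ∧ ((∀ y s, 0 < pdyR x y s) ↔ p1R < |p1I|) :=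
  csp_one_soliton_xy_derivative_general p1R p1I hp η1R hη1R η10 x hx
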